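/- Let n ≥ 2, w ∈ 𝔻, B(z) = ((z−w)/(1−w̄z))ⁿ, and let A be a Möbius transformation of the disk such that A ∘ B ∘ A^{−1} is also of the form ((z−w')/(1−w̄'z))ⁿ for some w' ∈ 𝔻. Then A(0) = 0, i.e., A is a rotation. -/

import Mathlib

/-!
Since `B` has a critical point at `w` and `A` has nowhere vanishing derivative, the identity
`A ∘ B = B' ∘ A` forces `A w` to be a critical point of `B'`, and the only critical point of `B'`
in the disk is `w'`. Hence `A 0 = A (B w) = B' (A w) = B' w' = 0`.
-/

open Complex ComplexConjugate Filter Topology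

section Semiconj

variable {𝕜 : Type*} [NontriviallyNormedField 𝕜]

theorem HasDerivAt.eq_zero_of_eventually_semiconj {A B B' : 𝕜 → 𝕜} {x α α' β : 𝕜}
    (hB : HasDerivAt B 0 x) (hA : HasDerivAt A α x) (hα : α ≠ 0)
    (hAB : HasDerivAt A α' (B x)) (hB' : HasDerivAt B' β (A x))
    (hsemiconj : (fun z => A (B z)) =ᶠ[𝓝 x] fun z => B' (A z)) : β = 0 := by
  have hleft : HasDerivAt (fun z => A (B z)) 0 x := by
    have := hAB.comp x hB
    rwa [mul_zero] at this
  have hright : HasDerivAt (fun z => B' (A z)) (β * α) x := hB'.comp x hA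
  have hβα : β * α = 0 := hright.unique (hleft.congr_of_eventuallyEq hsemiconj.symm)
  exact (mul_eq_zero.1 hβα).resolve_right hα

end Semiconj

noncomputable def blaschkeFactor (a z : ℂ) : ℂ := (z - a) / (1 - conj a * z)

section BlaschkeFactor

variable {a z : ℂ}

@[simp]
theorem blaschkeFactor_self (a : ℂ) : blaschkeFactor a a = 0 := by
  simp [blaschkeFactor]

theorem one_sub_conj_mul_ne_zero (ha : ‖a‖ < 1) (hz : ‖z‖ ≤ 1) : 1 - conj a * z ≠ 0 := by
  have : ‖conj a * z‖ < 1 := by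
    rw [norm_mul, RCLike.norm_conj]
    nlinarith [norm_nonneg a, norm_nonneg z]
  intro h
  rw [← sub_eq_zero.1 h, norm_one] at this
  exact this.false

theorem normSq_one_sub_conj_mul_sub_normSq_sub (a z : ℂ) :
    normSq (1 - conj a * z) - normSq (z - a) = (1 - normSq a) * (1 - normSq z) := by
  simp only [normSq_apply, sub_re, sub_im, mul_re, mul_im, conj_re, conj_im, one_re, one_im]
  ring

theorem norm_blaschkeFactor_lt_one (ha : ‖a‖ < 1) (hz : ‖z‖ < 1) :
    ‖blaschkeFactor a z‖ < 1 := by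
  have hden : 0 < ‖1 - conj a * z‖ := norm_pos_iff.2 (one_sub_conj_mul_ne_zero ha hz.le)
  rw [blaschkeFactor, norm_div, div_lt_one hden]
  have hnormSq : normSq (z - a) < normSq (1 - conj a * z) := by
    have hdiff := normSq_one_sub_conj_mul_sub_normSq_sub a z
    rw [← Complex.sq_norm a, ← Complex.sq_norm z] at hdiff
    have hpos : 0 < (1 - ‖a‖ ^ 2) * (1 - ‖z‖ ^ 2) :=
      mul_pos (by nlinarith [norm_nonneg a]) (by nlinarith [norm_nonneg z])
    linarith
  rw [← Complex.sq_norm, ← Complex.sq_norm] at hnormSq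
  exact pow_lt_pow_iff_left₀ (norm_nonneg _) hden.le two_ne_zero |>.1 hnormSq

theorem blaschkeFactor_eq_zero_iff (h : 1 - conj a * z ≠ 0) : blaschkeFactor a z = 0 ↔ z = a := by
  rw [blaschkeFactor, div_eq_zero_iff, sub_eq_zero, or_iff_left h]

theorem hasDerivAt_blaschkeFactor (h : 1 - conj a * z ≠ 0) :
    HasDerivAt (blaschkeFactor a) ((1 - normSq a) / (1 - conj a * z) ^ 2) z := by
  have hnum : HasDerivAt (fun z : ℂ => z - a) 1 z := (hasDerivAt_id z).sub_const a
  have hden : HasDerivAt (fun z : ℂ => 1 - conj a * z) (-conj a) z := by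
    simpa using ((hasDerivAt_id z).const_mul (conj a)).const_sub 1
  refine (hnum.div hden h).congr_deriv ?_
  rw [normSq_eq_conj_mul_self]
  ring

theorem one_sub_normSq_div_sq_ne_zero (ha : ‖a‖ < 1) {d : ℂ} (hd : d ≠ 0) :
    (1 - normSq a : ℂ) / d ^ 2 ≠ 0 := by
  refine div_ne_zero ?_ (pow_ne_zero 2 hd)
  rw [← ofReal_one, ← ofReal_sub, ofReal_ne_zero, sub_ne_zero, ← Complex.sq_norm]
  nlinarith [norm_nonneg a]

theorem hasDerivAt_blaschkeFactor_pow (n : ℕ) (h : 1 - conj a * z ≠ 0) :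
    HasDerivAt (fun z => blaschkeFactor a z ^ n)
      (n * blaschkeFactor a z ^ (n - 1) * ((1 - normSq a) / (1 - conj a * z) ^ 2)) z :=
  (hasDerivAt_blaschkeFactor h).pow n

theorem hasDerivAt_blaschkeFactor_pow_self {n : ℕ} (hn : n ≠ 1) (ha : ‖a‖ < 1) :
    HasDerivAt (fun z => blaschkeFactor a z ^ n) 0 a := by
  refine (hasDerivAt_blaschkeFactor_pow n (one_sub_conj_mul_ne_zero ha ha.le)).congr_deriv ?_
  rcases Nat.eq_zero_or_pos n with rfl | hpos
  · simp
  · simp [zero_pow (show n - 1 ≠ 0 by omega)]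

theorem eq_of_hasDerivAt_blaschkeFactor_pow_zero {n : ℕ} (hn : n ≠ 0) (ha : ‖a‖ < 1)
    (h : 1 - conj a * z ≠ 0) (hcrit : HasDerivAt (fun z => blaschkeFactor a z ^ n) 0 z) :
    z = a := by
  have := (hasDerivAt_blaschkeFactor_pow n h).unique hcrit
  rw [mul_eq_zero, mul_eq_zero, Nat.cast_eq_zero, or_iff_right hn,
    or_iff_left (one_sub_normSq_div_sq_ne_zero ha h)] at this
  exact (blaschkeFactor_eq_zero_iff h).1 (eq_zero_of_pow_eq_zero this)

end BlaschkeFactor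

theorem stmt_18 (n : ℕ) (hn : 2 ≤ n) (w w' : ℂ)
    (hw : ‖w‖ < 1) (hw' : ‖w'‖ < 1)
    (B B' : ℂ → ℂ)
    (hB : B = fun z => ((z - w) / (1 - (starRingEnd ℂ) w * z)) ^ n)
    (hB' : B' = fun z => ((z - w') / (1 - (starRingEnd ℂ) w' * z)) ^ n)
    (A : ℂ → ℂ) (θ : ℝ) (a : ℂ) (ha : ‖a‖ < 1)
    (hA : A = fun z => Complex.exp (θ * I) * ((z - a) / (1 - (starRingEnd ℂ) a * z)))
    (hconj : ∀ z : ℂ, ‖z‖ < 1 → A (B z) = B' (A z)) :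
    A 0 = 0 := by
  change B = fun z => blaschkeFactor w z ^ n at hB
  change B' = fun z => blaschkeFactor w' z ^ n at hB'
  change A = fun z => exp (θ * I) * blaschkeFactor a z at hA
  have hA_deriv (z : ℂ) (hz : ‖z‖ < 1) : HasDerivAt A
      (exp (θ * I) * ((1 - normSq a) / (1 - conj a * z) ^ 2)) z :=
    hA ▸ (hasDerivAt_blaschkeFactor (one_sub_conj_mul_ne_zero ha hz.le)).const_mul _
  have hAw : ‖A w‖ < 1 := by
    simpa [hA, norm_exp_ofReal_mul_I] using norm_blaschkeFactor_lt_one ha hw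
  have hBw : B w = 0 := by simp [hB, zero_pow (by omega : n ≠ 0)]
  have hsemiconj : (fun z => A (B z)) =ᶠ[𝓝 w] fun z => B' (A z) := by
    filter_upwards [Metric.isOpen_ball.mem_nhds (mem_ball_zero_iff.2 hw)] with z hz
    exact hconj z (mem_ball_zero_iff.1 hz)
  have hden : 1 - conj w' * A w ≠ 0 := one_sub_conj_mul_ne_zero hw' hAw.le
  have hB'_deriv := hasDerivAt_blaschkeFactor_pow n hden
  have hA_deriv_ne : exp (θ * I) * ((1 - normSq a) / (1 - conj a * w) ^ 2) ≠ 0 :=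
    mul_ne_zero (exp_ne_zero _)
      (one_sub_normSq_div_sq_ne_zero ha (one_sub_conj_mul_ne_zero ha hw.le))
  have hcrit := HasDerivAt.eq_zero_of_eventually_semiconj
    (hB ▸ hasDerivAt_blaschkeFactor_pow_self (by omega) hw) (hA_deriv w hw) hA_deriv_ne
    (hA_deriv (B w) (by simp [hBw])) (hB' ▸ hB'_deriv) hsemiconj
  have hAw' : A w = w' :=
    eq_of_hasDerivAt_blaschkeFactor_pow_zero (by omega) hw' hden (hcrit ▸ hB'_deriv)
  calc A 0 = A (B w) := by rw [hBw]
    _ = B' (A w) := hconj w hw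
    _ = 0 := by simp [hB', hAw', zero_pow (by omega : n ≠ 0)]
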